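/- Given a metric space $X$ with $\mathrm{asdim}(X)=\infty$ and $k\in\mathbb{N}$, the following are equivalent: (1) $\mathrm{trasdim}(X)\le\omega+k$; (2) for every $n\in\mathbb{N}$ there exists $m(n)\in\mathbb{N}$ such that for every $d>0$ there are uniformly bounded families $\mathcal{U}_{-k},\dots,\mathcal{U}_{m(n)}$ with $\mathcal{U}_i$ $n$-disjoint for $-k\le i\le 0$, $\mathcal{U}_j$ $d$-disjoint for $1\le j\le m(n)$, and $\bigcup_{i=-k}^{m(n)}\mathcal{U}_i$ covering $X$. -/

import Mathlib

/-!
If (2) holds with bounds `m n`, then every `σ ∈ A(X,d)` having more than `k` elements in `[0, n]`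
has at most `k + m n` elements: otherwise `k + 1` of its elements below `n` and `m n` further ones
would carry the families of (2) for `d = max σ + 1`. The collection of all such `σ` has Borst order
at most `ω + k`: deriving at `a` lowers `k` by one at the cost of replacing `m` by `max m (m a)`,
and for `k = 0` the derived collections consist of sets of bounded size.

If (2) fails at `n`, then for every `(k + 1)`-set `A` above `n` and every `p`, the union of `A` with
any `p`-set far enough out lies in `A(X,d)`. Deriving successively at the points of such an `A`
keeps this property with one point fewer, and once no point of `A` is left the collection
contains all far-out sets of each finite size, so its order is at least `ω`. Hence
`Ord A(X,d) > ω + k`.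
-/

noncomputable section
open Metric Set
open scoped ENNReal

/-- A family of subsets is `R`-bounded if every member has diameter at most `R`. -/
def RBounded {X : Type*} [PseudoMetricSpace X] (R : ℝ) (U : Set (Set X)) : Prop :=
  ∀ A ∈ U, ∀ x ∈ A, ∀ y ∈ A, dist x y ≤ R

/-- A family of subsets is `r`-disjoint if distinct members are at distance at least `r`. -/
def RDisjoint {X : Type*} [PseudoMetricSpace X] (r : ℝ) (U : Set (Set X)) : Prop :=
  ∀ A ∈ U, ∀ B ∈ U, A ≠ B → ∀ x ∈ A, ∀ y ∈ B, r ≤ dist x y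

/-- A family of subsets is uniformly bounded if it is `R`-bounded for some `R`. -/
def UniformlyBounded {X : Type*} [PseudoMetricSpace X] (U : Set (Set X)) : Prop :=
  ∃ R : ℝ, RBounded R U

/-- `asdim X ≤ n`: for every `r > 0` there are `n+1` uniformly bounded, `r`-disjoint
families of subsets of `X` whose union covers `X`. -/
def AsdimLE (X : Type*) [PseudoMetricSpace X] (n : ℕ) : Prop :=
  ∀ r : ℝ, 0 < r → ∃ U : Fin (n + 1) → Set (Set X),
    (∀ i, UniformlyBounded (U i)) ∧ (∀ i, RDisjoint r (U i)) ∧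
    (Set.univ : Set X) ⊆ ⋃ i, ⋃₀ U i

/-- `M^a` in Borst's notation. -/
def Mder (M : Set (Finset ℕ)) (a : ℕ) : Set (Finset ℕ) :=
  {τ | insert a τ ∈ M ∧ a ∉ τ}

/-- `OrdLE α M` means `Ord M ≤ α` in Borst's sense: `Ord M = 0` iff `M = ∅`, and
`Ord M ≤ α` iff `Ord M^a < α` for every `a ∈ ℕ`. -/
def OrdLE (α : Ordinal) (M : Set (Finset ℕ)) : Prop :=
  M = ∅ ∨ ∀ a : ℕ, ∃ β : {β : Ordinal // β < α}, OrdLE β.1 (Mder M a)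
termination_by α
decreasing_by exact β.2

/-- The collection `A(X,d)` of finite sets `σ ⊆ ℕ` for which there are no uniformly
bounded families `U i` (`i ∈ σ`), each `i`-disjoint, whose union covers `X`. -/
def AColl (X : Type*) [PseudoMetricSpace X] : Set (Finset ℕ) :=
  {σ | σ.Nonempty ∧ ¬ ∃ U : ℕ → Set (Set X),
    (∀ i ∈ σ, UniformlyBounded (U i)) ∧ (∀ i ∈ σ, RDisjoint (i : ℝ) (U i)) ∧
    (Set.univ : Set X) ⊆ ⋃ i ∈ σ, ⋃₀ U i}

theorem exists_finset_card_eq_forall_le (j t : ℕ) : ∃ A : Finset ℕ, A.card = j ∧ ∀ i ∈ A, t ≤ i :=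
  ⟨Finset.Ico t (t + j), by simp, fun _ hi => (Finset.mem_Ico.1 hi).1⟩

theorem Finset.exists_surjective_sum_fin {α : Type*} [DecidableEq α] (A B : Finset α) :
    ∃ f : Fin A.card ⊕ Fin B.card → ↥(A ∪ B), Function.Surjective f ∧
      (∀ i, (f (.inl i) : α) ∈ A) ∧ ∀ j, (f (.inr j) : α) ∈ B := by
  refine ⟨Sum.elim (fun i => ⟨A.equivFin.symm i, Finset.mem_union_left _ (A.equivFin.symm i).2⟩)
    (fun j => ⟨B.equivFin.symm j, Finset.mem_union_right _ (B.equivFin.symm j).2⟩),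
    fun ⟨x, hx⟩ => ?_, fun i => (A.equivFin.symm i).2, fun j => (B.equivFin.symm j).2⟩
  rcases Finset.mem_union.1 hx with hxA | hxB
  · exact ⟨.inl (A.equivFin ⟨x, hxA⟩), by simp⟩
  · exact ⟨.inr (B.equivFin ⟨x, hxB⟩), by simp⟩

theorem Finset.exists_injective_sum_fin {α : Type*} [DecidableEq α] {σ S : Finset α} {a b : ℕ}
    (hS : S ⊆ σ) (ha : a ≤ S.card) (hab : a + b ≤ σ.card) :
    ∃ g : Fin a ⊕ Fin b → σ, Function.Injective g ∧ ∀ i, (g (.inl i) : α) ∈ S := by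
  obtain ⟨S', hS'S, hS'⟩ := Finset.exists_subset_card_eq ha
  obtain ⟨T, hTσ, hT⟩ := Finset.exists_subset_card_eq (show b ≤ (σ \ S').card by
    rw [Finset.card_sdiff_of_subset (hS'S.trans hS)]; omega)
  let eS := (S'.equivFinOfCardEq hS').symm
  let eT := (T.equivFinOfCardEq hT).symm
  refine ⟨Sum.elim (fun i => ⟨eS i, hS (hS'S (eS i).2)⟩)
    (fun j => ⟨eT j, (Finset.mem_sdiff.1 (hTσ (eT j).2)).1⟩), ?_, fun i => hS'S (eS i).2⟩
  refine Function.Injective.sumElim ?_ ?_ fun i j h => ?_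
  · exact fun i i' h => eS.injective (Subtype.ext (Subtype.mk.inj h))
  · exact fun j j' h => eT.injective (Subtype.ext (Subtype.mk.inj h))
  · exact (Finset.mem_sdiff.1 (hTσ (eT j).2)).2 (congrArg Subtype.val h ▸ (eS i).2)

theorem ordLE_iff {α : Ordinal} {M : Set (Finset ℕ)} :
    OrdLE α M ↔ M = ∅ ∨ ∀ a : ℕ, ∃ β < α, OrdLE β (Mder M a) := by
  rw [OrdLE]
  simp only [Subtype.exists, exists_prop]

theorem ordLE_zero_iff {M : Set (Finset ℕ)} : OrdLE 0 M ↔ M = ∅ := by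
  rw [ordLE_iff]
  simp

theorem OrdLE.mono {α β : Ordinal} {M : Set (Finset ℕ)} (hM : OrdLE α M) (hαβ : α ≤ β) :
    OrdLE β M := by
  rw [ordLE_iff] at hM ⊢
  exact hM.imp_right fun h a => let ⟨γ, hγ, hγM⟩ := h a; ⟨γ, hγ.trans_le hαβ, hγM⟩

theorem OrdLE.subset {α : Ordinal} {M M' : Set (Finset ℕ)} (hM' : OrdLE α M') (hM : M ⊆ M') :
    OrdLE α M := by
  induction α using WellFoundedLT.induction generalizing M M' with
  | _ α ih =>
    rw [ordLE_iff] at hM' ⊢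
    refine hM'.imp (Set.subset_eq_empty hM) fun h a => ?_
    obtain ⟨β, hβ, hβM⟩ := h a
    exact ⟨β, hβ, ih β hβ hβM fun τ hτ => ⟨hM hτ.1, hτ.2⟩⟩

theorem card_lt_of_mem_mder {M : Set (Finset ℕ)} {p a : ℕ} (hM : ∀ σ ∈ M, σ.card < p + 1)
    {τ : Finset ℕ} (hτ : τ ∈ Mder M a) : τ.card < p := by
  have := hM _ hτ.1
  rw [Finset.card_insert_of_notMem hτ.2] at this
  omega

theorem ordLE_natCast_of_card_lt {M : Set (Finset ℕ)} {p : ℕ} (hM : ∀ σ ∈ M, σ.card < p) :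
    OrdLE p M := by
  induction p generalizing M with
  | zero => simpa [ordLE_zero_iff, Set.eq_empty_iff_forall_notMem] using hM
  | succ p ih =>
    rw [ordLE_iff]
    exact Or.inr fun a => ⟨p, by exact_mod_cast p.lt_succ_self,
      ih fun τ hτ => card_lt_of_mem_mder hM hτ⟩

def ContainsFarSets (N : Set (Finset ℕ)) (b : ℕ) : Prop :=
  ∃ s : ℕ, ∀ B : Finset ℕ, B.card = b → (∀ i ∈ B, s ≤ i) → B ∈ N

theorem not_ordLE_natCast_of_containsFarSets {N : Set (Finset ℕ)} {b : ℕ}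
    (hN : ContainsFarSets N b) : ¬ OrdLE b N := by
  induction b generalizing N with
  | zero =>
    obtain ⟨s, hs⟩ := hN
    rw [Nat.cast_zero, ordLE_zero_iff]
    exact Set.nonempty_iff_ne_empty.1 ⟨∅, hs ∅ rfl (by simp)⟩
  | succ b ih =>
    obtain ⟨s, hs⟩ := hN
    rw [ordLE_iff, not_or]
    obtain ⟨A, hAcard, hA⟩ := exists_finset_card_eq_forall_le (b + 1) s
    refine ⟨Set.nonempty_iff_ne_empty.1 ⟨A, hs A hAcard hA⟩, fun h => ?_⟩
    obtain ⟨β, hβ, hβN⟩ := h s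
    rw [Nat.cast_succ, Order.lt_add_one_iff] at hβ
    refine ih ⟨s + 1, fun B hBcard hB => ?_⟩ (hβN.mono hβ)
    have hsB : s ∉ B := fun h => by have := hB s h; omega
    refine ⟨hs _ (by rw [Finset.card_insert_of_notMem hsB, hBcard]) fun i hi => ?_, hsB⟩
    rcases Finset.mem_insert.1 hi with rfl | hi
    exacts [le_rfl, (hB i hi).trans' s.le_succ]

def ContainsFarUnions (N : Set (Finset ℕ)) (j t : ℕ) : Prop :=
  ∀ A : Finset ℕ, A.card = j → (∀ i ∈ A, t ≤ i) → ∀ p, ContainsFarSets {B | A ∪ B ∈ N} p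

namespace ContainsFarUnions

variable {N : Set (Finset ℕ)} {j t : ℕ}

theorem containsFarSets (hN : ContainsFarUnions N 0 t) (p : ℕ) : ContainsFarSets N p := by
  simpa using hN ∅ rfl (by simp) p

theorem nonempty (hN : ContainsFarUnions N j t) : N.Nonempty := by
  obtain ⟨A, hAcard, hA⟩ := exists_finset_card_eq_forall_le j t
  obtain ⟨s, hs⟩ := hN A hAcard hA 0
  exact ⟨A, by simpa using hs ∅ rfl (by simp)⟩

theorem mder (hN : ContainsFarUnions N (j + 1) t) : ContainsFarUnions (Mder N t) j (t + 1) := by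
  intro A hAcard hA p
  have htA : t ∉ A := fun h => by have := hA t h; omega
  obtain ⟨s, hs⟩ := hN (insert t A) (by rw [Finset.card_insert_of_notMem htA, hAcard])
    (fun i hi => (Finset.mem_insert.1 hi).elim ge_of_eq fun hi => (hA i hi).trans' t.le_succ) p
  refine ⟨max s (t + 1), fun B hBcard hB => ?_⟩
  have htB : t ∉ B := fun h => by have := hB t h; omega
  refine ⟨?_, by simp [htA, htB]⟩
  simpa [Finset.insert_union] using hs B hBcard fun i hi => le_of_max_le_left (hB i hi)

end ContainsFarUnions

theorem not_ordLE_of_lt_omega0_add {N : Set (Finset ℕ)} {j t : ℕ} {β : Ordinal}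
    (hN : ContainsFarUnions N j t) (hβ : β < Ordinal.omega0 + j) : ¬ OrdLE β N := by
  induction β using WellFoundedLT.induction generalizing N j t with
  | _ β ih =>
    cases j with
    | zero =>
      rw [Nat.cast_zero, add_zero] at hβ
      obtain ⟨b, rfl⟩ := Ordinal.lt_omega0.1 hβ
      exact not_ordLE_natCast_of_containsFarSets (hN.containsFarSets b)
    | succ j =>
      rw [ordLE_iff, not_or]
      refine ⟨hN.nonempty.ne_empty, fun h => ?_⟩
      obtain ⟨γ, hγ, hγN⟩ := h t
      rw [Nat.cast_succ, ← add_assoc, Order.lt_add_one_iff] at hβ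
      exact ih γ hγ hN.mder (hγ.trans_le hβ) hγN

def cardCapped (k : ℕ) (m : ℕ → ℕ) : Set (Finset ℕ) :=
  {σ | ∀ n, k < (σ.filter (· ≤ n)).card → σ.card ≤ k + m n}

theorem card_lt_of_mem_mder_cardCapped_zero {m : ℕ → ℕ} {a : ℕ} {τ : Finset ℕ}
    (hτ : τ ∈ Mder (cardCapped 0 m) a) : τ.card < m a := by
  have ha : 0 < ((insert a τ).filter (· ≤ a)).card :=
    Finset.card_pos.2 ⟨a, Finset.mem_filter.2 ⟨Finset.mem_insert_self a τ, le_rfl⟩⟩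
  have := hτ.1 a ha
  rw [Finset.card_insert_of_notMem hτ.2] at this
  omega

theorem mder_cardCapped_succ_subset (k : ℕ) (m : ℕ → ℕ) (a : ℕ) :
    Mder (cardCapped (k + 1) m) a ⊆ cardCapped k fun n => max (m n) (m a) := by
  rintro τ ⟨hτ, haτ⟩ n hn
  show τ.card ≤ k + max (m n) (m a)
  have hfilter : τ.filter (· ≤ n) ⊆ τ.filter (· ≤ max n a) :=
    Finset.monotone_filter_right _ fun i _ (hi : i ≤ n) => hi.trans (le_max_left n a)
  have hcount : k + 1 < ((insert a τ).filter (· ≤ max n a)).card := by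
    rw [Finset.filter_insert, if_pos (le_max_right n a),
      Finset.card_insert_of_notMem fun h => haτ (Finset.mem_filter.1 h).1]
    have := Finset.card_le_card hfilter
    omega
  have hcard := hτ _ hcount
  rw [Finset.card_insert_of_notMem haτ] at hcard
  have hm : m (max n a) ≤ max (m n) (m a) := by
    rcases max_choice n a with h | h <;> rw [h]
    exacts [le_max_left _ _, le_max_right _ _]
  omega

theorem ordLE_cardCapped (k : ℕ) (m : ℕ → ℕ) :
    OrdLE (Ordinal.omega0 + k) (cardCapped k m) := by
  induction k generalizing m with
  | zero =>
    rw [ordLE_iff]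
    refine Or.inr fun a => ⟨m a, by simp, ?_⟩
    exact ordLE_natCast_of_card_lt fun τ hτ => card_lt_of_mem_mder_cardCapped_zero hτ
  | succ k ih =>
    rw [ordLE_iff]
    refine Or.inr fun a => ⟨Ordinal.omega0 + k, ?_, ?_⟩
    · rw [Nat.cast_succ, ← add_assoc]
      exact Order.lt_add_one_iff.2 le_rfl
    · exact (ih _).subset (mder_cardCapped_succ_subset k m a)

section Covers

variable {X : Type*} [PseudoMetricSpace X]

theorem RDisjoint.mono {r r' : ℝ} {U : Set (Set X)} (hU : RDisjoint r U) (h : r' ≤ r) :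
    RDisjoint r' U :=
  fun A hA B hB hAB x hx y hy => h.trans (hU A hA B hB hAB x hx y hy)

theorem uniformlyBounded_empty : UniformlyBounded (∅ : Set (Set X)) :=
  ⟨0, fun _ h => h.elim⟩

theorem rDisjoint_empty (r : ℝ) : RDisjoint r (∅ : Set (Set X)) :=
  fun _ h => h.elim

variable (X) in
def HasCover {ι : Type*} (r : ι → ℝ) : Prop :=
  ∃ U : ι → Set (Set X), (∀ i, UniformlyBounded (U i)) ∧ (∀ i, RDisjoint (r i) (U i)) ∧
    (Set.univ : Set X) ⊆ ⋃ i, ⋃₀ U i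

namespace HasCover

variable {ι κ : Type*} {r : ι → ℝ} {r' : κ → ℝ}

theorem of_surjective (h : HasCover X r) {f : κ → ι} (hf : Function.Surjective f)
    (hr : ∀ j, r' j ≤ r (f j)) : HasCover X r' := by
  obtain ⟨U, hbdd, hdisj, hcov⟩ := h
  refine ⟨U ∘ f, fun j => hbdd _, fun j => (hdisj _).mono (hr j), fun x hx => ?_⟩
  obtain ⟨i, hi⟩ := Set.mem_iUnion.1 (hcov hx)
  obtain ⟨j, rfl⟩ := hf i
  exact Set.mem_iUnion.2 ⟨j, hi⟩

theorem of_injective (h : HasCover X r) {g : ι → κ} (hg : Function.Injective g)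
    (hr : ∀ i, r' (g i) ≤ r i) : HasCover X r' := by
  obtain ⟨U, hbdd, hdisj, hcov⟩ := h
  refine ⟨Function.extend g U fun _ => ∅, fun j => ?_, fun j => ?_, fun x hx => ?_⟩
  · obtain ⟨i, rfl⟩ | hj := em (∃ i, g i = j)
    · rw [hg.extend_apply]; exact hbdd i
    · rw [Function.extend_apply' _ _ _ hj]; exact uniformlyBounded_empty
  · obtain ⟨i, rfl⟩ | hj := em (∃ i, g i = j)
    · rw [hg.extend_apply]; exact (hdisj i).mono (hr i)
    · rw [Function.extend_apply' _ _ _ hj]; exact rDisjoint_empty _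
  · obtain ⟨i, hi⟩ := Set.mem_iUnion.1 (hcov hx)
    exact Set.mem_iUnion.2 ⟨g i, by rwa [hg.extend_apply]⟩

end HasCover

theorem hasCover_sum_iff {ι κ : Type*} (r : ι → ℝ) (r' : κ → ℝ) :
    HasCover X (Sum.elim r r') ↔ ∃ (V : ι → Set (Set X)) (W : κ → Set (Set X)),
      (∀ i, UniformlyBounded (V i)) ∧ (∀ j, UniformlyBounded (W j)) ∧
      (∀ i, RDisjoint (r i) (V i)) ∧ (∀ j, RDisjoint (r' j) (W j)) ∧
      (Set.univ : Set X) ⊆ (⋃ i, ⋃₀ V i) ∪ ⋃ j, ⋃₀ W j := by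
  constructor
  · rintro ⟨U, hbdd, hdisj, hcov⟩
    exact ⟨U ∘ Sum.inl, U ∘ Sum.inr, fun i => hbdd _, fun j => hbdd _, fun i => hdisj _,
      fun j => hdisj _, by rwa [Set.iUnion_sum] at hcov⟩
  · rintro ⟨V, W, hVbdd, hWbdd, hVdisj, hWdisj, hcov⟩
    exact ⟨Sum.elim V W, Sum.forall.2 ⟨hVbdd, hWbdd⟩, Sum.forall.2 ⟨hVdisj, hWdisj⟩,
      by rwa [Set.iUnion_sum]⟩

theorem hasCover_iff_notMem_AColl {σ : Finset ℕ} (hσ : σ.Nonempty) :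
    HasCover X (fun i : σ => (i : ℝ)) ↔ σ ∉ AColl X := by
  simp only [AColl, Set.mem_ofPred_eq, hσ, true_and, not_not]
  constructor
  · rintro ⟨U, hbdd, hdisj, hcov⟩
    refine ⟨fun i => if h : i ∈ σ then U ⟨i, h⟩ else ∅, fun i hi => ?_, fun i hi => ?_,
      fun x hx => ?_⟩
    · simpa [hi] using hbdd ⟨i, hi⟩
    · simpa [hi] using hdisj ⟨i, hi⟩
    · obtain ⟨⟨i, hi⟩, hxi⟩ := Set.mem_iUnion.1 (hcov hx)
      exact Set.mem_biUnion hi (by simpa [hi] using hxi)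
  · rintro ⟨U, hbdd, hdisj, hcov⟩
    refine ⟨fun i => U i, fun i => hbdd i i.2, fun i => hdisj i i.2, fun x hx => ?_⟩
    obtain ⟨i, hi, hxi⟩ := Set.mem_iUnion₂.1 (hcov hx)
    exact Set.mem_iUnion.2 ⟨⟨i, hi⟩, hxi⟩

theorem containsFarUnions_AColl {j t : ℕ} (hj : 0 < j)
    (h : ∀ p, ∃ d : ℝ, ¬ HasCover X (Sum.elim (fun _ : Fin j => (t : ℝ)) (fun _ : Fin p => d))) :
    ContainsFarUnions (AColl X) j t := by
  rintro A rfl hA p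
  obtain ⟨d, hd⟩ := h p
  refine ⟨⌈d⌉₊, ?_⟩
  rintro B rfl hB
  have hne : (A ∪ B).Nonempty := (Finset.card_pos.1 hj).mono Finset.subset_union_left
  by_contra hAB
  obtain ⟨f, hf, hfA, hfB⟩ := A.exists_surjective_sum_fin B
  refine hd (((hasCover_iff_notMem_AColl hne).2 hAB).of_surjective hf (Sum.forall.2 ⟨?_, ?_⟩))
  · exact fun i => by simpa using hA _ (hfA i)
  · exact fun j => (Nat.le_ceil d).trans (by simpa using hB _ (hfB j))

theorem AColl_subset_cardCapped {k : ℕ} {m : ℕ → ℕ}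
    (h : ∀ (n : ℕ) (d : ℝ), 0 < d →
      HasCover X (Sum.elim (fun _ : Fin (k + 1) => (n : ℝ)) (fun _ : Fin (m n) => d))) :
    AColl X ⊆ cardCapped k m := by
  intro σ hσ n hn
  by_contra! hcard
  obtain ⟨g, hg, hgS⟩ :=
    Finset.exists_injective_sum_fin (b := m n) (σ.filter_subset (· ≤ n)) hn (by omega)
  have hd : (0 : ℝ) < (σ.max' hσ.1 : ℝ) + 1 := by positivity
  refine (hasCover_iff_notMem_AColl hσ.1).1 ((h n _ hd).of_injective hg ?_) hσ
  refine Sum.forall.2 ⟨fun i => ?_, fun j => ?_⟩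
  · simpa using (Finset.mem_filter.1 (hgS i)).2
  · have : (g (.inr j) : ℕ) ≤ σ.max' hσ.1 := σ.le_max' _ (g (.inr j)).2
    simp only [Sum.elim_inr]
    exact_mod_cast this.trans (Nat.le_succ _)

theorem ordLE_omega0_add_AColl_iff (k : ℕ) :
    OrdLE (Ordinal.omega0 + k) (AColl X) ↔ ∀ n : ℕ, ∃ m : ℕ, ∀ d : ℝ, 0 < d →
      HasCover X (Sum.elim (fun _ : Fin (k + 1) => (n : ℝ)) (fun _ : Fin m => d)) := by
  constructor
  · intro hOrd n
    by_contra! hno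
    refine not_ordLE_of_lt_omega0_add (j := k + 1) (t := n) ?_ ?_ hOrd
    · exact containsFarUnions_AColl k.succ_pos fun p => (hno p).imp fun _ => And.right
    · simp
  · intro h
    choose m hm using h
    exact (ordLE_cardCapped k m).subset (AColl_subset_cardCapped hm)

end Covers

theorem trasdim_le_omega_add_iff_general {X : Type*} [PseudoMetricSpace X] (k : ℕ) :
    OrdLE (Ordinal.omega0 + (k : Ordinal)) (AColl X) ↔
      ∀ n : ℕ, ∃ m : ℕ, ∀ d : ℝ, 0 < d →
        ∃ (V : Fin (k + 1) → Set (Set X)) (W : Fin m → Set (Set X)),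
          (∀ i, UniformlyBounded (V i)) ∧ (∀ j, UniformlyBounded (W j)) ∧
          (∀ i, RDisjoint (n : ℝ) (V i)) ∧ (∀ j, RDisjoint d (W j)) ∧
          (Set.univ : Set X) ⊆ (⋃ i, ⋃₀ V i) ∪ ⋃ j, ⋃₀ W j := by
  simpa only [hasCover_sum_iff] using ordLE_omega0_add_AColl_iff (X := X) k

/-- Proposition 2.5: characterization of `trasdim X ≤ ω + k` for a space of infinite
asymptotic dimension. -/
theorem trasdim_le_omega_add_iff {X : Type*} [PseudoMetricSpace X] (k : ℕ)
    (hX : ∀ n : ℕ, ¬ AsdimLE X n) :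
    OrdLE (Ordinal.omega0 + (k : Ordinal)) (AColl X) ↔
      ∀ n : ℕ, ∃ m : ℕ, ∀ d : ℝ, 0 < d →
        ∃ (V : Fin (k + 1) → Set (Set X)) (W : Fin m → Set (Set X)),
          (∀ i, UniformlyBounded (V i)) ∧ (∀ j, UniformlyBounded (W j)) ∧
          (∀ i, RDisjoint (n : ℝ) (V i)) ∧ (∀ j, RDisjoint d (W j)) ∧
          (Set.univ : Set X) ⊆ (⋃ i, ⋃₀ V i) ∪ ⋃ j, ⋃₀ W j :=
  trasdim_le_omega_add_iff_general k
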